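/- arXiv:2302.03283 — 4 statements merged into one kernel-verified Lean document; each statement's English description precedes it below -/
import Mathlib

section
/- Let λξ ∈ ℤ² with |ξ| = 1 and let g(x) = a(x)cos(λξ·x) for a smooth function a on 𝕋². Then Λg = λg + (ξ·∇a)sin(λξ·x) + T_{1,λξ}[a]cos(λξ·x) + T_{2,λξ}[a]sin(λξ·x), where T_{1,λξ} and T_{2,λξ} are the Fourier multipliers with symbols ( (|λξ+k| + |λξ−k|)/2 − λ ) and i( (|λξ+k| − |λξ−k|)/2 − ξ·k ) respectively. -/
/-- The character `e^{i k·x}` for `k ∈ ℤ²`, `x ∈ ℝ²` (trigonometric polynomials on 𝕋²). -/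
noncomputable def ee (k : ℤ × ℤ) (x : ℝ × ℝ) : ℂ :=
  Complex.exp (Complex.I * Complex.ofReal ((k.1 : ℝ) * x.1 + (k.2 : ℝ) * x.2))

/-- The Euclidean norm `|k|` of a lattice frequency. -/
noncomputable def nrm (k : ℤ × ℤ) : ℝ := Real.sqrt (((k.1 : ℝ)) ^ 2 + ((k.2 : ℝ)) ^ 2)

/-!
Writing `θ = λξ·x`, the hypothesis `K = λξ` turns `e^{iK·x}` into `cos θ + i sin θ`, so the two
shifted modes `e^{i(k±K)·x}` of `e^{ik·x} cos θ` recombine into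
`Λ(e^{ik·x} cos θ) = e^{ik·x} ((|k+K| + |k-K|)/2 · cos θ + i (|k+K| - |k-K|)/2 · sin θ)`.
The claimed decomposition is this identity summed over `k`, once `λ` and `ξ·k` are added to and
subtracted from the two symbols.
-/

open Finset

lemma ee_add (j k : ℤ × ℤ) (x : ℝ × ℝ) : ee (j + k) x = ee j x * ee k x := by
  unfold ee
  rw [← Complex.exp_add]
  congr 1
  push_cast [Prod.fst_add, Prod.snd_add]
  ring

lemma ee_eq_cos_add_sin_mul_I {k : ℤ × ℤ} {x : ℝ × ℝ} {θ : ℝ}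
    (hθ : (k.1 : ℝ) * x.1 + (k.2 : ℝ) * x.2 = θ) :
    ee k x = Complex.cos θ + Complex.sin θ * Complex.I := by
  rw [ee, hθ, mul_comm, Complex.exp_mul_I]

lemma ee_neg_eq_cos_sub_sin_mul_I {k : ℤ × ℤ} {x : ℝ × ℝ} {θ : ℝ}
    (hθ : (k.1 : ℝ) * x.1 + (k.2 : ℝ) * x.2 = θ) :
    ee (-k) x = Complex.cos θ - Complex.sin θ * Complex.I := by
  have hθ' : ((-k).1 : ℝ) * x.1 + ((-k).2 : ℝ) * x.2 = -θ := by
    rw [← hθ, Prod.fst_neg, Prod.snd_neg]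
    push_cast
    ring
  rw [ee_eq_cos_add_sin_mul_I hθ', Complex.ofReal_neg, Complex.cos_neg, Complex.sin_neg]
  ring

lemma nrm_sub_comm (j k : ℤ × ℤ) : nrm (j - k) = nrm (k - j) := by
  unfold nrm
  push_cast [Prod.fst_sub, Prod.snd_sub]
  ring_nf

lemma nrm_mul_ee_add_add_nrm_mul_ee_sub {k K : ℤ × ℤ} {x : ℝ × ℝ} {θ : ℝ}
    (hθ : (K.1 : ℝ) * x.1 + (K.2 : ℝ) * x.2 = θ) :
    (nrm (k + K) : ℂ) * ee (k + K) x + nrm (k - K) * ee (k - K) x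
      = ee k x * ((nrm (k + K) + nrm (k - K) : ℝ) * Complex.cos θ
          + Complex.I * (nrm (k + K) - nrm (k - K) : ℝ) * Complex.sin θ) := by
  rw [ee_add, sub_eq_add_neg, ee_add, ee_eq_cos_add_sin_mul_I hθ, ee_neg_eq_cos_sub_sin_mul_I hθ]
  push_cast
  ring

theorem lambda_of_modulated_wave_general
    (lam : ℝ) (ξ : ℝ × ℝ)
    (K : ℤ × ℤ) (hK : ((K.1 : ℝ), (K.2 : ℝ)) = lam • ξ)
    (S : Finset (ℤ × ℤ)) (c : ℤ × ℤ → ℂ) :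
    ∀ x : ℝ × ℝ,
      -- Λ g
      (∑ k ∈ S, c k / 2 * (Complex.ofReal (nrm (k + K)) * ee (k + K) x
          + Complex.ofReal (nrm (k - K)) * ee (k - K) x))
      =
      -- λ g
      Complex.ofReal lam * ((∑ k ∈ S, c k * ee k x)
          * Complex.ofReal (Real.cos (lam * (ξ.1 * x.1 + ξ.2 * x.2))))
      -- (ξ·∇a) sin(λξ·x)
      + (∑ k ∈ S, (Complex.I * Complex.ofReal (ξ.1 * (k.1 : ℝ) + ξ.2 * (k.2 : ℝ))) * c k * ee k x)
          * Complex.ofReal (Real.sin (lam * (ξ.1 * x.1 + ξ.2 * x.2)))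
      -- T_{1,λξ}[a] cos(λξ·x), symbol ((|λξ+k| + |λξ-k|)/2 - λ)
      + (∑ k ∈ S, Complex.ofReal ((nrm (K + k) + nrm (K - k)) / 2 - lam) * c k * ee k x)
          * Complex.ofReal (Real.cos (lam * (ξ.1 * x.1 + ξ.2 * x.2)))
      -- T_{2,λξ}[a] sin(λξ·x), symbol i((|λξ+k| - |λξ-k|)/2 - ξ·k)
      + (∑ k ∈ S, (Complex.I * Complex.ofReal
            ((nrm (K + k) - nrm (K - k)) / 2 - (ξ.1 * (k.1 : ℝ) + ξ.2 * (k.2 : ℝ)))) * c k * ee k x)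
          * Complex.ofReal (Real.sin (lam * (ξ.1 * x.1 + ξ.2 * x.2))) := by
  intro x
  have hK₁ : (K.1 : ℝ) = lam * ξ.1 := congrArg Prod.fst hK
  have hK₂ : (K.2 : ℝ) = lam * ξ.2 := congrArg Prod.snd hK
  have hθ : (K.1 : ℝ) * x.1 + (K.2 : ℝ) * x.2 = lam * (ξ.1 * x.1 + ξ.2 * x.2) := by
    rw [hK₁, hK₂]
    ring
  rw [Complex.ofReal_cos, Complex.ofReal_sin, ← mul_assoc, mul_sum, sum_mul, sum_mul, sum_mul,
    sum_mul, ← sum_add_distrib, ← sum_add_distrib, ← sum_add_distrib]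
  refine sum_congr rfl fun k _ => ?_
  rw [mul_assoc, nrm_mul_ee_add_add_nrm_mul_ee_sub hθ, add_comm K k, nrm_sub_comm K k]
  push_cast
  ring

/-- Lemma on Λ of a modulated wave: for `g = a·cos(λξ·x)` with
`a = ∑_{k∈S} c k e^{ik·x}`,
`Λg = λg + (ξ·∇a)sin(λξ·x) + T_{1,λξ}[a]cos(λξ·x) + T_{2,λξ}[a]sin(λξ·x)`,
where `Λg` is computed frequency-by-frequency via the multiplier `|k|`. -/
theorem lambda_of_modulated_wave
    (lam : ℝ) (hlam : 0 < lam) (ξ : ℝ × ℝ) (hξ : ξ.1 ^ 2 + ξ.2 ^ 2 = 1)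
    (K : ℤ × ℤ) (hK : ((K.1 : ℝ), (K.2 : ℝ)) = lam • ξ)
    (S : Finset (ℤ × ℤ)) (c : ℤ × ℤ → ℂ) :
    ∀ x : ℝ × ℝ,
      -- Λ g
      (∑ k ∈ S, c k / 2 * (Complex.ofReal (nrm (k + K)) * ee (k + K) x
          + Complex.ofReal (nrm (k - K)) * ee (k - K) x))
      =
      -- λ g
      Complex.ofReal lam * ((∑ k ∈ S, c k * ee k x)
          * Complex.ofReal (Real.cos (lam * (ξ.1 * x.1 + ξ.2 * x.2))))
      -- (ξ·∇a) sin(λξ·x)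
      + (∑ k ∈ S, (Complex.I * Complex.ofReal (ξ.1 * (k.1 : ℝ) + ξ.2 * (k.2 : ℝ))) * c k * ee k x)
          * Complex.ofReal (Real.sin (lam * (ξ.1 * x.1 + ξ.2 * x.2)))
      -- T_{1,λξ}[a] cos(λξ·x), symbol ((|λξ+k| + |λξ-k|)/2 - λ)
      + (∑ k ∈ S, Complex.ofReal ((nrm (K + k) + nrm (K - k)) / 2 - lam) * c k * ee k x)
          * Complex.ofReal (Real.cos (lam * (ξ.1 * x.1 + ξ.2 * x.2)))
      -- T_{2,λξ}[a] sin(λξ·x), symbol i((|λξ+k| - |λξ-k|)/2 - ξ·k)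
      + (∑ k ∈ S, (Complex.I * Complex.ofReal
            ((nrm (K + k) - nrm (K - k)) / 2 - (ξ.1 * (k.1 : ℝ) + ξ.2 * (k.2 : ℝ)))) * c k * ee k x)
          * Complex.ofReal (Real.sin (lam * (ξ.1 * x.1 + ξ.2 * x.2))) :=
  lambda_of_modulated_wave_general lam ξ K hK S c
end

section
/- Let ξ₁ = (3/5, 4/5), ξ₂ = (1,0), and define the Riesz-type symbols m₁(k) = 25(k₂²−k₁²)/(12|k|²), m₂(k) = 7(k₂²−k₁²)/(12|k|²) + 4k₁k₂/|k|². Then for every k = (k₁,k₂) ∈ ℝ²∖{0}, the vector k − ξ₁^⊥(ξ₁·k)m₁(k) − ξ₂^⊥(ξ₂·k)m₂(k) is parallel to k^⊥ = (−k₂, k₁). -/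
/-- with `ξ₁ = (3/5,4/5)`, `ξ₂ = (1,0)` (so `ξ₁^⊥ = (-4/5,3/5)`,
`ξ₂^⊥ = (0,1)`) and the Riesz-type symbols
`m₁(k) = 25(k₂²-k₁²)/(12|k|²)`, `m₂(k) = 7(k₂²-k₁²)/(12|k|²) + 4k₁k₂/|k|²`,
for every `k ≠ 0` the vector `k - ξ₁^⊥(ξ₁·k)m₁(k) - ξ₂^⊥(ξ₂·k)m₂(k)` is parallel
to `k^⊥ = (-k₂, k₁)`. -/
theorem riesz_symbol_decomposition (k : ℝ × ℝ) (hk : k ≠ 0) :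
    ∃ t : ℝ,
      k - ((((3 : ℝ) / 5) * k.1 + ((4 : ℝ) / 5) * k.2)
            * (25 * (k.2 ^ 2 - k.1 ^ 2) / (12 * (k.1 ^ 2 + k.2 ^ 2))))
          • ((-(4 : ℝ) / 5, (3 : ℝ) / 5) : ℝ × ℝ)
        - ((1 * k.1 + 0 * k.2)
            * (7 * (k.2 ^ 2 - k.1 ^ 2) / (12 * (k.1 ^ 2 + k.2 ^ 2))
              + 4 * k.1 * k.2 / (k.1 ^ 2 + k.2 ^ 2)))
          • (((0 : ℝ), (1 : ℝ)) : ℝ × ℝ)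
      = t • ((-k.2, k.1) : ℝ × ℝ) := by
  have hS : k.1 ^ 2 + k.2 ^ 2 ≠ 0 := by
    rcases (Prod.mk.injEq _ _ _ _ ▸ hk.symm : ¬ ((0:ℝ) = k.1 ∧ (0:ℝ) = k.2)) with h
    intro hS
    have h1 : k.1 = 0 := by nlinarith [sq_nonneg k.1, sq_nonneg k.2]
    have h2 : k.2 = 0 := by nlinarith [sq_nonneg k.1, sq_nonneg k.2]
    exact hk (Prod.ext h1 h2)
  refine ⟨-2 * (3 * k.1 * k.2 + 2 * k.2 ^ 2 - 2 * k.1 ^ 2) / (3 * (k.1 ^ 2 + k.2 ^ 2)), ?_⟩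
  apply Prod.ext <;> simp [Prod.smul_def, smul_eq_mul] <;> field_simp <;> ring
end

section
/- Let ξ₁ = (3/5, 4/5) and ξ₂ = (1,0), and let R₁^o, R₂^o be the Fourier multipliers with symbols 25(k₂²−k₁²)/(12|k|²) and 7(k₂²−k₁²)/(12|k|²) + 4k₁k₂/|k|² respectively. Then for any mean-zero G ∈ C₀^∞(𝕋²) there exists a function F such that ∇G = Σ_{j=1}^{2} ξ_j^⊥ (ξ_j·∇)(R_j^o G) + ∇^⊥ F. -/
/-- symbol of R₁^o -/
noncomputable def m1 (k : ℤ × ℤ) : ℝ :=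
  25 * ((k.2 : ℝ) ^ 2 - (k.1 : ℝ) ^ 2) / (12 * ((k.1 : ℝ) ^ 2 + (k.2 : ℝ) ^ 2))

/-- symbol of R₂^o -/
noncomputable def m2 (k : ℤ × ℤ) : ℝ :=
  7 * ((k.2 : ℝ) ^ 2 - (k.1 : ℝ) ^ 2) / (12 * ((k.1 : ℝ) ^ 2 + (k.2 : ℝ) ^ 2))
    + 4 * (k.1 : ℝ) * (k.2 : ℝ) / ((k.1 : ℝ) ^ 2 + (k.2 : ℝ) ^ 2)

open Complex

lemma eq_smul_perp_of_orthogonal {a b : ℝ} (v : ℝ × ℝ) (hab : a ^ 2 + b ^ 2 ≠ 0)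
    (hv : a * v.1 + b * v.2 = 0) :
    v = ((a * v.2 - b * v.1) / (a ^ 2 + b ^ 2)) • (-b, a) := by
  ext
  · simp only [Prod.smul_fst, smul_eq_mul]
    field_simp
    linear_combination a * hv
  · simp only [Prod.smul_snd, smul_eq_mul]
    field_simp
    linear_combination b * hv

/-- `k − ξ₁^⊥ (ξ₁·k) m₁(k) − ξ₂^⊥ (ξ₂·k) m₂(k)` with `ξ₁^⊥ = (-4/5, 3/5)`, `ξ₂^⊥ = (0, 1)`. -/
noncomputable def symbolResidual (k : ℤ × ℤ) : ℝ × ℝ :=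
  ((k.1 : ℝ) + 4 / 5 * (3 / 5 * k.1 + 4 / 5 * k.2) * m1 k,
    (k.2 : ℝ) - 3 / 5 * (3 / 5 * k.1 + 4 / 5 * k.2) * m1 k - k.1 * m2 k)

/-- The symbol of the stream function `F` as a multiplier applied to `G`. -/
noncomputable def streamSymbol (k : ℤ × ℤ) : ℝ :=
  ((k.1 : ℝ) * (symbolResidual k).2 - k.2 * (symbolResidual k).1)
    / ((k.1 : ℝ) ^ 2 + (k.2 : ℝ) ^ 2)

lemma inner_symbolResidual (k : ℤ × ℤ) (hk : (k.1 : ℝ) ^ 2 + (k.2 : ℝ) ^ 2 ≠ 0) :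
    (k.1 : ℝ) * (symbolResidual k).1 + k.2 * (symbolResidual k).2 = 0 := by
  simp only [symbolResidual, m1, m2]
  field_simp
  ring

lemma symbolResidual_eq_smul_perp (k : ℤ × ℤ) :
    symbolResidual k = streamSymbol k • (-(k.2 : ℝ), (k.1 : ℝ)) := by
  by_cases hk : (k.1 : ℝ) ^ 2 + (k.2 : ℝ) ^ 2 = 0
  · obtain ⟨h1, h2⟩ : (k.1 : ℝ) = 0 ∧ (k.2 : ℝ) = 0 := by
      constructor <;> nlinarith [sq_nonneg (k.1 : ℝ), sq_nonneg (k.2 : ℝ)]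
    simp [symbolResidual, h1, h2]
  · exact eq_smul_perp_of_orthogonal _ hk (inner_symbolResidual k hk)

noncomputable def dotCLM (k : ℤ × ℤ) : ℝ × ℝ →L[ℝ] ℝ :=
  (k.1 : ℝ) • ContinuousLinearMap.fst ℝ ℝ ℝ + (k.2 : ℝ) • ContinuousLinearMap.snd ℝ ℝ ℝ

@[simp]
lemma dotCLM_apply (k : ℤ × ℤ) (v : ℝ × ℝ) :
    dotCLM k v = (k.1 : ℝ) * v.1 + (k.2 : ℝ) * v.2 := by
  simp [dotCLM]

lemma hasFDerivAt_ee (k : ℤ × ℤ) (x : ℝ × ℝ) :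
    HasFDerivAt (ee k) ((ee k x * I) • ofRealCLM.comp (dotCLM k)) x := by
  have h := (((ofRealCLM.comp (dotCLM k)).hasFDerivAt (x := x)).const_mul I).cexp
  have he : (fun y => exp (I * ofRealCLM.comp (dotCLM k) y)) = ee k := by
    ext y
    simp [ee]
  rw [he, smul_smul] at h
  exact h

lemma hasFDerivAt_trigSum (S : Finset (ℤ × ℤ)) (b : ℤ × ℤ → ℂ) (x : ℝ × ℝ) :
    HasFDerivAt (fun y => ∑ k ∈ S, b k * ee k y)
      (∑ k ∈ S, (b k * (ee k x * I)) • ofRealCLM.comp (dotCLM k)) x := by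
  refine HasFDerivAt.fun_sum fun k _ => ?_
  simpa only [smul_smul] using (hasFDerivAt_ee k x).const_mul (b k)

lemma fderiv_trigSum_apply (S : Finset (ℤ × ℤ)) (b : ℤ × ℤ → ℂ) (x v : ℝ × ℝ) :
    fderiv ℝ (fun y => ∑ k ∈ S, b k * ee k y) x v
      = ∑ k ∈ S, I * (((k.1 : ℝ) * v.1 + (k.2 : ℝ) * v.2 : ℝ) : ℂ) * b k * ee k x := by
  rw [(hasFDerivAt_trigSum S b x).fderiv, sum_apply]
  refine Finset.sum_congr rfl fun k _ => ?_
  simp only [smul_apply, ContinuousLinearMap.comp_apply, ofRealCLM_apply,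
    dotCLM_apply, smul_eq_mul]
  ring

theorem algebraic_lemma_decomposition_general
    (S : Finset (ℤ × ℤ)) (c : ℤ × ℤ → ℂ) :
    ∃ F : ℝ × ℝ → ℂ, Differentiable ℝ F ∧ ∀ x : ℝ × ℝ,
      -- ∇G
      ((∑ k ∈ S, Complex.I * Complex.ofReal (k.1 : ℝ) * c k * ee k x,
        ∑ k ∈ S, Complex.I * Complex.ofReal (k.2 : ℝ) * c k * ee k x) : ℂ × ℂ)
      =
      -- ξ₁^⊥ (ξ₁·∇)(R₁^o G), ξ₁^⊥ = (-4/5, 3/5)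
      ((Complex.ofReal (-(4 : ℝ) / 5)) * (∑ k ∈ S, Complex.I
            * Complex.ofReal ((3 / 5) * (k.1 : ℝ) + (4 / 5) * (k.2 : ℝ))
            * Complex.ofReal (m1 k) * c k * ee k x),
        (Complex.ofReal ((3 : ℝ) / 5)) * (∑ k ∈ S, Complex.I
            * Complex.ofReal ((3 / 5) * (k.1 : ℝ) + (4 / 5) * (k.2 : ℝ))
            * Complex.ofReal (m1 k) * c k * ee k x))
      -- ξ₂^⊥ (ξ₂·∇)(R₂^o G), ξ₂^⊥ = (0,1)
      + ((0 : ℂ),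
          ∑ k ∈ S, Complex.I * Complex.ofReal ((k.1 : ℝ))
            * Complex.ofReal (m2 k) * c k * ee k x)
      -- ∇^⊥ F = (-∂₂F, ∂₁F)
      + (-(fderiv ℝ F x ((0 : ℝ), (1 : ℝ))), fderiv ℝ F x ((1 : ℝ), (0 : ℝ))) := by
  refine ⟨fun y => ∑ k ∈ S, (streamSymbol k * c k) * ee k y,
    fun x => (hasFDerivAt_trigSum S _ x).differentiableAt, fun x => ?_⟩
  rw [fderiv_trigSum_apply, fderiv_trigSum_apply]
  have hres (k : ℤ × ℤ) := symbolResidual_eq_smul_perp k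
  simp only [Prod.ext_iff, symbolResidual, Prod.smul_mk, smul_eq_mul] at hres
  simp only [Prod.mk_add_mk, Prod.mk.injEq, Finset.mul_sum, ← Finset.sum_neg_distrib,
    ← Finset.sum_add_distrib, add_zero]
  constructor <;> refine Finset.sum_congr rfl fun k _ => ?_
  · have h := congrArg ofReal (hres k).1
    push_cast at h ⊢
    linear_combination (I * c k * ee k x) * h
  · have h := congrArg ofReal (hres k).2
    push_cast at h ⊢
    linear_combination (I * c k * ee k x) * h

/-- Algebraic Lemma: for any mean-zero trigonometric polynomial
`G = ∑_{k∈S} c k e^{ik·x}` there is `F` with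
`∇G = ξ₁^⊥(ξ₁·∇)(R₁^o G) + ξ₂^⊥(ξ₂·∇)(R₂^o G) + ∇^⊥F`,
with `ξ₁ = (3/5,4/5)`, `ξ₂ = (1,0)`. -/
theorem algebraic_lemma_decomposition
    (S : Finset (ℤ × ℤ)) (hS : ((0, 0) : ℤ × ℤ) ∉ S) (c : ℤ × ℤ → ℂ) :
    ∃ F : ℝ × ℝ → ℂ, Differentiable ℝ F ∧ ∀ x : ℝ × ℝ,
      -- ∇G
      ((∑ k ∈ S, Complex.I * Complex.ofReal (k.1 : ℝ) * c k * ee k x,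
        ∑ k ∈ S, Complex.I * Complex.ofReal (k.2 : ℝ) * c k * ee k x) : ℂ × ℂ)
      =
      -- ξ₁^⊥ (ξ₁·∇)(R₁^o G), ξ₁^⊥ = (-4/5, 3/5)
      ((Complex.ofReal (-(4 : ℝ) / 5)) * (∑ k ∈ S, Complex.I
            * Complex.ofReal ((3 / 5) * (k.1 : ℝ) + (4 / 5) * (k.2 : ℝ))
            * Complex.ofReal (m1 k) * c k * ee k x),
        (Complex.ofReal ((3 : ℝ) / 5)) * (∑ k ∈ S, Complex.I
            * Complex.ofReal ((3 / 5) * (k.1 : ℝ) + (4 / 5) * (k.2 : ℝ))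
            * Complex.ofReal (m1 k) * c k * ee k x))
      -- ξ₂^⊥ (ξ₂·∇)(R₂^o G), ξ₂^⊥ = (0,1)
      + ((0 : ℂ),
          ∑ k ∈ S, Complex.I * Complex.ofReal ((k.1 : ℝ))
            * Complex.ofReal (m2 k) * c k * ee k x)
      -- ∇^⊥ F = (-∂₂F, ∂₁F)
      + (-(fderiv ℝ F x ((0 : ℝ), (1 : ℝ))), fderiv ℝ F x ((1 : ℝ), (0 : ℝ))) :=
  algebraic_lemma_decomposition_general S c
end

section
/- Let f ∈ Ḣ^{−1/2}(𝕋²) and ψ ∈ C^∞(𝕋²). Then the commutator [∇^⊥Λ^{-1}, ∇ψ]f = ∇^⊥Λ^{-1}(f∇ψ) − (∇^⊥Λ^{-1}f)·∇ψ belongs to Ḣ^{1/2}(𝕋²), with ‖[∇^⊥Λ^{-1}, ∇ψ]f‖_{Ḣ^{1/2}} ≲_ψ ‖f‖_{Ḣ^{−1/2}}. -/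
/-!
The commutator has Fourier symbol `(q - k) · (σ q - σ k)` acting on the coefficient of
`f` at `k` and that of `ψ` at `q - k`, where `σ k = i k^⊥/|k|` is a rotated unit vector.
For unit vectors one has `|q| |k| |q/|q| - k/|k||² ≤ |q - k|²`, so
`|q|^{1/2} |symbol| ≤ |q - k|² |k|^{-1/2}`: the half derivative gained on each side is
paid for by two derivatives of `ψ`. Young's inequality `ℓ² * ℓ¹ ⊆ ℓ²` then bounds the
`Ḣ^{1/2}` norm of the commutator by `∑ⱼ |ψ̂ j| |j|²` times the `Ḣ^{-1/2}` norm of `f`.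
-/

open scoped Classical Pointwise

/-- the (vector) symbol `i k^⊥/|k|` of `∇^⊥Λ^{-1}` -/
noncomputable def Msym (k : ℤ × ℤ) : ℂ × ℂ :=
  if k = 0 then 0
  else (Complex.I * Complex.ofReal (-(k.2 : ℝ) / nrm k),
        Complex.I * Complex.ofReal ((k.1 : ℝ) / nrm k))

/-- squared homogeneous Sobolev norm `‖·‖_{Ḣ^s}²` of a trigonometric polynomial -/
noncomputable def hsNormSq (s : ℝ) (S : Finset (ℤ × ℤ)) (c : ℤ × ℤ → ℂ) : ℝ :=
  ∑ k ∈ S, nrm k ^ (2 * s) * ‖c k‖ ^ 2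

/-- Fourier coefficients of the commutator `[∇^⊥Λ^{-1}, ∇ψ]f = ∇^⊥Λ^{-1}(f∇ψ) - (∇^⊥Λ^{-1}f)·∇ψ`
for `f = ∑_{k∈S} c k e^{ik·x}` and `ψ` with coefficients `d`. -/
noncomputable def commCoef (S : Finset (ℤ × ℤ)) (c d : ℤ × ℤ → ℂ) (q : ℤ × ℤ) : ℂ :=
  ∑ k ∈ S, c k * d (q - k) *
    (Complex.I * Complex.ofReal (((q - k).1 : ℝ)) * ((Msym q).1 - (Msym k).1)
      + Complex.I * Complex.ofReal (((q - k).2 : ℝ)) * ((Msym q).2 - (Msym k).2))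

open scoped InnerProductSpace

theorem norm_mul_norm_mul_norm_inv_smul_sub_sq_le {E : Type*} [NormedAddCommGroup E]
    [InnerProductSpace ℝ E] (x y : E) :
    ‖x‖ * ‖y‖ * ‖‖x‖⁻¹ • x - ‖y‖⁻¹ • y‖ ^ 2 ≤ ‖x - y‖ ^ 2 := by
  rcases eq_or_ne x 0 with rfl | hx
  · simp
  rcases eq_or_ne y 0 with rfl | hy
  · simp
  have key : ‖x‖ * ‖y‖ * ‖‖x‖⁻¹ • x - ‖y‖⁻¹ • y‖ ^ 2 = 2 * (‖x‖ * ‖y‖ - ⟪x, y⟫_ℝ) := by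
    rw [norm_sub_sq_real]
    simp only [norm_smul, norm_inv, norm_norm, real_inner_smul_left, real_inner_smul_right]
    field_simp
    ring
  rw [key, norm_sub_sq_real]
  nlinarith [sq_nonneg (‖x‖ - ‖y‖)]

theorem Finset.sum_comp_le_sum_of_injOn {ι κ : Type*} {s : Finset ι} {t : Finset κ} {f : ι → κ}
    (hf : Set.InjOn f s) {b : κ → ℝ} (hb : ∀ j, 0 ≤ b j) (hbt : ∀ j ∉ t, b j = 0) :
    ∑ i ∈ s, b (f i) ≤ ∑ j ∈ t, b j := by
  rw [← Finset.sum_image hf, ← Finset.sum_filter_of_ne (p := (· ∈ t))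
    fun j _ hj => by_contra fun hjt => hj (hbt j hjt)]
  exact Finset.sum_le_sum_of_subset_of_nonneg (fun j hj => (Finset.mem_filter.mp hj).2)
    fun j _ _ => hb j

theorem Finset.sum_sq_sum_mul_sub_le {G : Type*} [AddCommGroup G] (Q S T : Finset G) (a : G → ℝ)
    {b : G → ℝ} (hb : ∀ j, 0 ≤ b j) (hbT : ∀ j ∉ T, b j = 0) :
    ∑ q ∈ Q, (∑ k ∈ S, a k * b (q - k)) ^ 2 ≤ (∑ j ∈ T, b j) ^ 2 * ∑ k ∈ S, a k ^ 2 := by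
  set B := ∑ j ∈ T, b j
  have hrow (q : G) : ∑ k ∈ S, b (q - k) ≤ B :=
    Finset.sum_comp_le_sum_of_injOn sub_right_injective.injOn hb hbT
  have hcol (k : G) : ∑ q ∈ Q, b (q - k) ≤ B :=
    Finset.sum_comp_le_sum_of_injOn sub_left_injective.injOn hb hbT
  have hB : 0 ≤ B := Finset.sum_nonneg fun j _ => hb j
  calc ∑ q ∈ Q, (∑ k ∈ S, a k * b (q - k)) ^ 2
      ≤ ∑ q ∈ Q, (∑ k ∈ S, b (q - k)) * ∑ k ∈ S, a k ^ 2 * b (q - k) :=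
        Finset.sum_le_sum fun q _ => Finset.sum_sq_le_sum_mul_sum_of_sq_le_mul S
          (fun k _ => hb _) (fun k _ => by have := hb (q - k); positivity)
          fun k _ => le_of_eq (by ring)
    _ ≤ ∑ q ∈ Q, B * ∑ k ∈ S, a k ^ 2 * b (q - k) := by
        gcongr with q _ k _
        · exact Finset.sum_nonneg fun k _ => by have := hb (q - k); positivity
        · exact hrow q
    _ = B * ∑ k ∈ S, a k ^ 2 * ∑ q ∈ Q, b (q - k) := by
        rw [← Finset.mul_sum, Finset.sum_comm]
        simp only [Finset.mul_sum]
    _ ≤ B * ∑ k ∈ S, a k ^ 2 * B := by gcongr with k _; exact hcol k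
    _ = B ^ 2 * ∑ k ∈ S, a k ^ 2 := by rw [← Finset.sum_mul]; ring

noncomputable def latticeToComplex (k : ℤ × ℤ) : ℂ := ⟨k.1, k.2⟩

theorem latticeToComplex_sub (q k : ℤ × ℤ) :
    latticeToComplex (q - k) = latticeToComplex q - latticeToComplex k := by
  apply Complex.ext <;> simp [latticeToComplex]

theorem latticeToComplex_ne_zero {k : ℤ × ℤ} (hk : k ≠ 0) : latticeToComplex k ≠ 0 := by
  contrapose! hk
  simpa [latticeToComplex, Complex.ext_iff, Prod.ext_iff] using hk

theorem nrm_eq_norm_latticeToComplex (k : ℤ × ℤ) : nrm k = ‖latticeToComplex k‖ := by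
  rw [nrm, Complex.norm_def, Complex.normSq_mk, latticeToComplex]; ring_nf

theorem nrm_nonneg (k : ℤ × ℤ) : 0 ≤ nrm k := Real.sqrt_nonneg _

theorem nrm_pos {k : ℤ × ℤ} (hk : k ≠ 0) : 0 < nrm k := by
  rw [nrm_eq_norm_latticeToComplex]; exact norm_pos_iff.mpr (latticeToComplex_ne_zero hk)

-- `k^⊥/|k|` under `ℤ² ⊂ ℂ`, where `k^⊥ = i k`; like `Msym`, it vanishes at `k = 0`.
noncomputable def rotUnit (k : ℤ × ℤ) : ℂ :=
  Complex.I * (‖latticeToComplex k‖⁻¹ • latticeToComplex k)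

theorem Msym_eq (k : ℤ × ℤ) :
    Msym k = (Complex.I * (rotUnit k).re, Complex.I * (rotUnit k).im) := by
  rcases eq_or_ne k 0 with rfl | hk
  · simp [Msym, rotUnit, latticeToComplex, Prod.ext_iff]
  · rw [Msym, if_neg hk, rotUnit, ← nrm_eq_norm_latticeToComplex]
    simp only [latticeToComplex, Prod.mk.injEq, Complex.smul_re, Complex.smul_im, Complex.mul_re,
      Complex.mul_im, Complex.I_re, Complex.I_im]
    constructor <;> congr 2 <;> simp only [smul_eq_mul] <;> ring

noncomputable def commSymbol (q k : ℤ × ℤ) : ℂ :=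
  Complex.I * Complex.ofReal (((q - k).1 : ℝ)) * ((Msym q).1 - (Msym k).1)
    + Complex.I * Complex.ofReal (((q - k).2 : ℝ)) * ((Msym q).2 - (Msym k).2)

theorem commSymbol_eq (q k : ℤ × ℤ) :
    commSymbol q k = -(⟪latticeToComplex (q - k), rotUnit q - rotUnit k⟫_ℝ : ℂ) := by
  simp only [commSymbol, Msym_eq, Complex.inner, latticeToComplex, Complex.mul_re,
    Complex.conj_re, Complex.conj_im, Complex.sub_re, Complex.sub_im]
  push_cast
  linear_combination (((q - k).1 : ℂ) * ((rotUnit q).re - (rotUnit k).re)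
    + ((q - k).2 : ℂ) * ((rotUnit q).im - (rotUnit k).im)) * Complex.I_sq

theorem norm_commSymbol_le (q k : ℤ × ℤ) :
    ‖commSymbol q k‖ ≤ nrm (q - k) * ‖rotUnit q - rotUnit k‖ := by
  rw [commSymbol_eq, norm_neg, Complex.norm_real, Real.norm_eq_abs, nrm_eq_norm_latticeToComplex]
  exact abs_real_inner_le_norm _ _

theorem nrm_mul_nrm_mul_norm_commSymbol_sq_le (q k : ℤ × ℤ) :
    nrm q * nrm k * ‖commSymbol q k‖ ^ 2 ≤ nrm (q - k) ^ 4 := by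
  set z := latticeToComplex
  have hnn : 0 ≤ nrm q * nrm k := mul_nonneg (nrm_nonneg q) (nrm_nonneg k)
  calc nrm q * nrm k * ‖commSymbol q k‖ ^ 2
      ≤ nrm q * nrm k * (nrm (q - k) * ‖rotUnit q - rotUnit k‖) ^ 2 := by
        gcongr; exact norm_commSymbol_le q k
    _ = nrm (q - k) ^ 2 * (‖z q‖ * ‖z k‖ * ‖‖z q‖⁻¹ • z q - ‖z k‖⁻¹ • z k‖ ^ 2) := by
        rw [rotUnit, rotUnit, ← mul_sub, norm_mul, Complex.norm_I, one_mul,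
          nrm_eq_norm_latticeToComplex q, nrm_eq_norm_latticeToComplex k]
        ring
    _ ≤ nrm (q - k) ^ 2 * ‖z q - z k‖ ^ 2 := by
        gcongr; exact norm_mul_norm_mul_norm_inv_smul_sub_sq_le _ _
    _ = nrm (q - k) ^ 4 := by rw [← latticeToComplex_sub, ← nrm_eq_norm_latticeToComplex]; ring

theorem sqrt_nrm_mul_norm_commSymbol_le {k : ℤ × ℤ} (hk : k ≠ 0) (q : ℤ × ℤ) :
    √(nrm q) * ‖commSymbol q k‖ ≤ nrm (q - k) ^ 2 / √(nrm k) := by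
  have hk' : 0 < √(nrm k) := Real.sqrt_pos.mpr (nrm_pos hk)
  rw [le_div_iff₀ hk', ← pow_le_pow_iff_left₀ (by positivity) (by positivity) two_ne_zero]
  calc (√(nrm q) * ‖commSymbol q k‖ * √(nrm k)) ^ 2
      = nrm q * nrm k * ‖commSymbol q k‖ ^ 2 := by
        rw [mul_pow, mul_pow, Real.sq_sqrt (nrm_nonneg q), Real.sq_sqrt (nrm_nonneg k)]; ring
    _ ≤ nrm (q - k) ^ 4 := nrm_mul_nrm_mul_norm_commSymbol_sq_le q k
    _ = (nrm (q - k) ^ 2) ^ 2 := by ring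

theorem hsNormSq_half (S : Finset (ℤ × ℤ)) (e : ℤ × ℤ → ℂ) :
    hsNormSq (1 / 2) S e = ∑ k ∈ S, (√(nrm k) * ‖e k‖) ^ 2 := by
  refine Finset.sum_congr rfl fun k _ => ?_
  rw [mul_pow, Real.sq_sqrt (nrm_nonneg k), show (2 : ℝ) * (1 / 2) = 1 by norm_num,
    Real.rpow_one]

theorem hsNormSq_neg_half (S : Finset (ℤ × ℤ)) (c : ℤ × ℤ → ℂ) :
    hsNormSq (-(1 / 2)) S c = ∑ k ∈ S, (‖c k‖ / √(nrm k)) ^ 2 := by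
  refine Finset.sum_congr rfl fun k _ => ?_
  rw [div_pow, Real.sq_sqrt (nrm_nonneg k), show (2 : ℝ) * (-(1 / 2)) = -1 by norm_num,
    Real.rpow_neg_one, inv_mul_eq_div]

theorem sqrt_nrm_mul_norm_commCoef_le {S : Finset (ℤ × ℤ)} (hS : ((0, 0) : ℤ × ℤ) ∉ S)
    (c d : ℤ × ℤ → ℂ) (q : ℤ × ℤ) :
    √(nrm q) * ‖commCoef S c d q‖
      ≤ ∑ k ∈ S, ‖c k‖ / √(nrm k) * (‖d (q - k)‖ * nrm (q - k) ^ 2) := by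
  change √(nrm q) * ‖∑ k ∈ S, c k * d (q - k) * commSymbol q k‖ ≤ _
  calc √(nrm q) * ‖∑ k ∈ S, c k * d (q - k) * commSymbol q k‖
      ≤ √(nrm q) * ∑ k ∈ S, ‖c k‖ * ‖d (q - k)‖ * ‖commSymbol q k‖ := by
        gcongr
        exact (norm_sum_le _ _).trans_eq (by simp only [norm_mul])
    _ = ∑ k ∈ S, ‖c k‖ * ‖d (q - k)‖ * (√(nrm q) * ‖commSymbol q k‖) := by
        rw [Finset.mul_sum]; exact Finset.sum_congr rfl fun k _ => by ring
    _ ≤ ∑ k ∈ S, ‖c k‖ * ‖d (q - k)‖ * (nrm (q - k) ^ 2 / √(nrm k)) := by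
        gcongr with k hk
        exact sqrt_nrm_mul_norm_commSymbol_le (ne_of_mem_of_not_mem hk hS) q
    _ = ∑ k ∈ S, ‖c k‖ / √(nrm k) * (‖d (q - k)‖ * nrm (q - k) ^ 2) :=
        Finset.sum_congr rfl fun k _ => by ring

theorem hsNormSq_half_commCoef_le {Sψ : Finset (ℤ × ℤ)} {d : ℤ × ℤ → ℂ}
    (hd : ∀ k ∉ Sψ, d k = 0) {S : Finset (ℤ × ℤ)} (hS : ((0, 0) : ℤ × ℤ) ∉ S)
    (Q : Finset (ℤ × ℤ)) (c : ℤ × ℤ → ℂ) :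
    hsNormSq (1 / 2) Q (commCoef S c d)
      ≤ (∑ j ∈ Sψ, ‖d j‖ * nrm j ^ 2) ^ 2 * hsNormSq (-(1 / 2)) S c := by
  rw [hsNormSq_half, hsNormSq_neg_half]
  calc ∑ q ∈ Q, (√(nrm q) * ‖commCoef S c d q‖) ^ 2
      ≤ ∑ q ∈ Q, (∑ k ∈ S, ‖c k‖ / √(nrm k) * (‖d (q - k)‖ * nrm (q - k) ^ 2)) ^ 2 :=
        Finset.sum_le_sum fun q _ => pow_le_pow_left₀ (by positivity)
          (sqrt_nrm_mul_norm_commCoef_le hS c d q) 2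
    _ ≤ (∑ j ∈ Sψ, ‖d j‖ * nrm j ^ 2) ^ 2 * ∑ k ∈ S, (‖c k‖ / √(nrm k)) ^ 2 :=
        Finset.sum_sq_sum_mul_sub_le (b := fun j => ‖d j‖ * nrm j ^ 2) _ _ _ _
          (fun j => mul_nonneg (norm_nonneg _) (sq_nonneg _)) fun j hj => by simp [hd j hj]

/-- for smooth `ψ` the commutator `[∇^⊥Λ^{-1}, ∇ψ]` maps `Ḣ^{-1/2}(𝕋²)`
to `Ḣ^{1/2}(𝕋²)`: `‖[∇^⊥Λ^{-1},∇ψ]f‖_{Ḣ^{1/2}} ≲_ψ ‖f‖_{Ḣ^{-1/2}}`. -/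
theorem commutator_gains_one_derivative
    (Sψ : Finset (ℤ × ℤ)) (d : ℤ × ℤ → ℂ) (hd : ∀ k ∉ Sψ, d k = 0) :
    ∃ C : ℝ, 0 < C ∧
      ∀ S : Finset (ℤ × ℤ), ((0, 0) : ℤ × ℤ) ∉ S →
      ∀ c : ℤ × ℤ → ℂ,
      Real.sqrt (hsNormSq (1 / 2) (S + Sψ) (commCoef S c d))
        ≤ C * Real.sqrt (hsNormSq (-(1 / 2)) S c) := by
  set B := ∑ j ∈ Sψ, ‖d j‖ * nrm j ^ 2
  have hB : 0 ≤ B := Finset.sum_nonneg fun j _ => mul_nonneg (norm_nonneg _) (sq_nonneg _)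
  refine ⟨B + 1, by linarith, fun S hS c => ?_⟩
  calc √(hsNormSq (1 / 2) (S + Sψ) (commCoef S c d))
      ≤ √(B ^ 2 * hsNormSq (-(1 / 2)) S c) :=
        Real.sqrt_le_sqrt (hsNormSq_half_commCoef_le hd hS _ c)
    _ = B * √(hsNormSq (-(1 / 2)) S c) := by rw [Real.sqrt_mul (sq_nonneg B), Real.sqrt_sq hB]
    _ ≤ (B + 1) * √(hsNormSq (-(1 / 2)) S c) := by gcongr; linarith
end
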